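/- arXiv:2306.00533 — 6 statements merged into one kernel-verified Lean document; each statement's English description precedes it below -/
import Mathlib

section
/- Let R be a commutative ring and D a square-free integer; work in Z[√D]. For p a rational prime and z ∈ Z[√D] with p | ‖z‖, define A(p,z) to be the 2×2 matrix with entries [[p, z],[z̄, ‖z‖/p]]. If A(p,z) = B·C where B = [[a,b],[c,1−a]] and C = [[d,e],[f,1−d]] are idempotent matrices over Z[√D], then z(1−a) = kb, z̄a = pc, zd = pe, and z̄(1−d) = kf, where k = ‖z‖/p. -/
open Polynomial

set_option synthInstance.maxHeartbeats 1000000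
set_option maxHeartbeats 1000000

noncomputable abbrev Ksq (D : ℤ) := AdjoinRoot ((X : ℚ[X]) ^ 2 - C (D : ℚ))

noncomputable abbrev Osq (D : ℤ) := integralClosure ℤ (Ksq D)

noncomputable def conjK (D : ℤ) : Ksq D →ₐ[ℚ] Ksq D :=
  AdjoinRoot.liftAlgHom _ (Algebra.ofId ℚ _) (-(AdjoinRoot.root _)) (by
    have h0 : (AdjoinRoot.mk ((X : ℚ[X]) ^ 2 - C (D : ℚ)))
        ((X : ℚ[X]) ^ 2 - C (D : ℚ)) = 0 := AdjoinRoot.mk_self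
    simp only [map_sub, map_pow, AdjoinRoot.mk_X, AdjoinRoot.mk_C, sub_eq_zero] at h0
    show aeval (-(AdjoinRoot.root ((X : ℚ[X]) ^ 2 - C (D : ℚ)))) ((X : ℚ[X]) ^ 2 - C (D : ℚ)) = 0
    simp [map_sub, map_pow, neg_pow, h0, AdjoinRoot.algebraMap_eq])

noncomputable def conjO (D : ℤ) (z : Osq D) : Osq D :=
  ⟨conjK D z.1, z.2.map ((conjK D).restrictScalars ℤ)⟩

theorem stmt_6 (D : ℤ) (hD : Squarefree D) (p : ℤ) (hp : Prime p)
    (z : Osq D) (k : ℤ) (hk : z * conjO D z = ((p * k : ℤ) : Osq D))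
    (a b c d e f : Osq D)
    (hB : !![a, b; c, 1 - a] * !![a, b; c, 1 - a] = !![a, b; c, 1 - a])
    (hC : !![d, e; f, 1 - d] * !![d, e; f, 1 - d] = !![d, e; f, 1 - d])
    (hA : !![(p : Osq D), z; conjO D z, (k : Osq D)] =
      !![a, b; c, 1 - a] * !![d, e; f, 1 - d]) :
    z * (1 - a) = (k : Osq D) * b ∧ conjO D z * a = (p : Osq D) * c ∧
      z * d = (p : Osq D) * e ∧ conjO D z * (1 - d) = (k : Osq D) * f := by
  have hBA : !![a, b; c, 1 - a] * !![(p : Osq D), z; conjO D z, (k : Osq D)] =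
      !![(p : Osq D), z; conjO D z, (k : Osq D)] := by rw [hA, ← mul_assoc, hB]
  have hAC : !![(p : Osq D), z; conjO D z, (k : Osq D)] * !![d, e; f, 1 - d] =
      !![(p : Osq D), z; conjO D z, (k : Osq D)] := by rw [hA, mul_assoc, hC]
  have e01 := congrFun (congrFun hBA 0) 1
  have e10 := congrFun (congrFun hBA 1) 0
  have f01 := congrFun (congrFun hAC 0) 1
  have f10 := congrFun (congrFun hAC 1) 0
  simp [Matrix.mul_apply, Fin.sum_univ_two] at e01 e10 f01 f10
  exact ⟨by linear_combination -e01, by linear_combination -e10, by linear_combination -f01,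
    by linear_combination -f10⟩
end

section
/- Let D ≡ 2 or 3 (mod 4) be a square-free integer, p a rational prime, and z = z₁ + z₂√D ∈ Z[√D] with ‖z‖ = z₁² − D z₂² = −p². Then gcd(z₁, z₂·D) ∈ {1, p, p²}, and if moreover ⟨p,z⟩ is non-principal (equivalently z ∉ ⟨p⟩ with a suitable m), then gcd(z₁, z₂·D) = 1. -/
theorem stmt_10 (D : ℤ) (hD : Squarefree D) (hD4 : D % 4 = 2 ∨ D % 4 = 3)
    (p : ℤ) (hp : Prime p)
    (hirr : Irreducible ((p : Zsqrtd D))) (hnp : ¬ Prime ((p : Zsqrtd D)))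
    (z₁ z₂ : ℤ) (hz : z₁ ^ 2 - D * z₂ ^ 2 = -p ^ 2) :
    (Int.gcd z₁ (z₂ * D) = 1 ∨ Int.gcd z₁ (z₂ * D) = p.natAbs ∨
        Int.gcd z₁ (z₂ * D) = p.natAbs ^ 2) ∧
      (¬ (Ideal.span {(p : Zsqrtd D), (⟨z₁, z₂⟩ : Zsqrtd D)}).IsPrincipal →
        Int.gcd z₁ (z₂ * D) = 1) := by
  set g : ℕ := Int.gcd z₁ (z₂ * D) with hg
  have h1 : (g : ℤ) ∣ z₁ := Int.gcd_dvd_left _ _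
  have h2 : (g : ℤ) ∣ z₂ * D := Int.gcd_dvd_right _ _
  have hgp2 : (g : ℤ) ∣ p ^ 2 := by
    have ha : (g : ℤ) ∣ z₁ ^ 2 := Dvd.dvd.pow h1 (by norm_num)
    have hb : (g : ℤ) ∣ D * z₂ ^ 2 := by
      have : D * z₂ ^ 2 = z₂ * (z₂ * D) := by ring
      rw [this]; exact Dvd.dvd.mul_left h2 z₂
    have : (g : ℤ) ∣ z₁ ^ 2 - D * z₂ ^ 2 := dvd_sub ha hb
    rw [hz] at this
    exact (dvd_neg.mp this)
  have hq : Nat.Prime p.natAbs := Int.prime_iff_natAbs_prime.mp hp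
  have hgn : g ∣ p.natAbs ^ 2 := by
    have := Int.natAbs_dvd_natAbs.mpr hgp2
    simpa [Int.natAbs_pow] using this
  obtain ⟨m, hm2, hmeq⟩ := (Nat.dvd_prime_pow hq).mp hgn
  constructor
  · interval_cases m
    · left; simpa using hmeq
    · right; left; simpa using hmeq
    · right; right; exact hmeq
  · intro hprin
    by_contra hg1
    -- then m ≥ 1, so p.natAbs ∣ g
    have hm1 : 1 ≤ m := by
      rcases Nat.eq_zero_or_pos m with h | h
      · exact absurd (by simpa [h] using hmeq) hg1
      · exact h
    have hpg : (p : ℤ) ∣ (g : ℤ) := by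
      have : p.natAbs ∣ g := hmeq ▸ dvd_pow_self _ (Nat.one_le_iff_ne_zero.mp hm1)
      have := Int.natCast_dvd_natCast.mpr this
      exact (Int.natAbs_dvd.mp this)
    have hpz1 : p ∣ z₁ := hpg.trans h1
    have hpz2D : p ∣ z₂ * D := hpg.trans h2
    have hpz2 : p ∣ z₂ := by
      by_contra hpz2
      have hD' : p ∣ D := (hp.dvd_mul.mp hpz2D).resolve_left hpz2
      obtain ⟨D', hD'eq⟩ := hD'
      have hp2 : p ^ 2 ∣ D * z₂ ^ 2 := by
        have : D * z₂ ^ 2 = z₁ ^ 2 + p ^ 2 := by linarith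
        rw [this]
        exact dvd_add (pow_dvd_pow_of_dvd hpz1 2) dvd_rfl
      have hpD' : p ∣ D' * z₂ ^ 2 := by
        have heq : p * (D' * z₂ ^ 2) = D * z₂ ^ 2 := by rw [hD'eq]; ring
        have h' : p * p ∣ p * (D' * z₂ ^ 2) := by rw [heq]; simpa [sq] using hp2
        exact (mul_dvd_mul_iff_left hp.ne_zero).mp h'
      have hpD'2 : p ∣ D' := by
        rcases hp.dvd_mul.mp hpD' with h | h
        · exact h
        · exact absurd (hp.dvd_of_dvd_pow h) hpz2
      have : IsUnit p := hD p (by rw [hD'eq]; exact mul_dvd_mul_left p hpD'2)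
      exact hp.not_isUnit this
    -- now p ∣ z₁ and p ∣ z₂, so the ideal is principal
    apply hprin
    have hdvd : (p : Zsqrtd D) ∣ (⟨z₁, z₂⟩ : Zsqrtd D) :=
      (Zsqrtd.intCast_dvd p _).mpr ⟨hpz1, hpz2⟩
    refine ⟨(p : Zsqrtd D), ?_⟩
    rw [Ideal.span_insert]
    rw [sup_eq_left.mpr (Ideal.span_singleton_le_span_singleton.mpr hdvd)]
end

section
/- Let D ≡ 2, 3 (mod 4) be a square-free integer, p a prime integer irreducible but not prime in Z[√D] with p odd, and z = z₁ + z₂√D ∈ Z[√D] with ⟨p,z⟩ non-principal and ‖z‖ = −p². Then there exist a, b, c ∈ Z[√D] with a(1−a) = bc such that A(p,z) = [[a,b],[c,1−a]] · [[ā, c̄],[b̄, 1−ā]], where A(p,z) = [[p, z],[z̄, −p]]. -/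
theorem stmt_14 (D : ℤ) (hD : Squarefree D) (hD4 : D % 4 = 2 ∨ D % 4 = 3)
    (p : ℤ) (hp : Prime p) (hpodd : Odd p)
    (hirr : Irreducible ((p : Zsqrtd D))) (hnp : ¬ Prime ((p : Zsqrtd D)))
    (z : Zsqrtd D)
    (hnpr : ¬ (Ideal.span {(p : Zsqrtd D), z}).IsPrincipal)
    (hnorm : Zsqrtd.norm z = -p ^ 2) :
    ∃ a b c : Zsqrtd D, a * (1 - a) = b * c ∧
      !![(p : Zsqrtd D), z; star z, (-p : Zsqrtd D)] =
        !![a, b; c, 1 - a] * !![star a, star c; star b, 1 - star a] := by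
  have hz : z.re * z.re - D * z.im * z.im = -p ^ 2 := by
    rw [← Zsqrtd.norm_def]; exact hnorm
  -- p does not divide z.re
  have hpre : ¬ p ∣ z.re := by
    intro hpr
    -- then p divides z.im as well
    have him : p ∣ z.im := by
      have hdd : p * p ∣ D * z.im * z.im := by
        have h1 : D * z.im * z.im = z.re * z.re + p * p := by
          have h2 : (p:ℤ) ^ 2 = p * p := sq p
          linarith
        rw [h1]
        exact dvd_add (mul_dvd_mul hpr hpr) dvd_rfl
      by_cases hpD : p ∣ D
      · obtain ⟨D', hD'⟩ := hpD
        have hpD' : ¬ p ∣ D' := by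
          intro h
          obtain ⟨E, hE⟩ := h
          exact hp.not_unit (hD p ⟨E, by linear_combination hD' + p * hE⟩)
        have hstep : p ∣ D' * (z.im * z.im) := by
          have h3 : p * p ∣ p * (D' * (z.im * z.im)) := by
            have : D * z.im * z.im = p * (D' * (z.im * z.im)) := by
              linear_combination z.im * z.im * hD'
            rwa [this] at hdd
          exact (mul_dvd_mul_iff_left hp.ne_zero).mp h3
        rcases hp.2.2 _ _ hstep with h | h
        · exact absurd h hpD'
        · rcases hp.2.2 _ _ h with h | h <;> exact h
      · have hstep : p ∣ D * (z.im * z.im) := by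
          have : D * z.im * z.im = D * (z.im * z.im) := by ring
          rw [← this]
          exact dvd_trans (dvd_mul_right p p) hdd
        rcases hp.2.2 _ _ hstep with h | h
        · exact absurd h hpD
        · rcases hp.2.2 _ _ h with h | h <;> exact h
    -- so (p : Zsqrtd D) ∣ z, making the ideal principal
    have hdvd : (p : Zsqrtd D) ∣ z := (Zsqrtd.intCast_dvd p z).mpr ⟨hpr, him⟩
    apply hnpr
    have heq : Ideal.span ({(p : Zsqrtd D), z} : Set (Zsqrtd D)) =
        Ideal.span {(p : Zsqrtd D)} := by
      rw [show ({(p : Zsqrtd D), z} : Set (Zsqrtd D)) = insert (p : Zsqrtd D) {z} from rfl,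
      Ideal.span_insert]
      rw [sup_eq_left, Ideal.span_le]
      intro x hx
      simp only [Set.mem_singleton_iff] at hx
      subst hx
      exact Ideal.mem_span_singleton.mpr hdvd
    exact ⟨⟨(p : Zsqrtd D), heq⟩⟩
  -- p is coprime to 2 * z.re
  have hp2re : ¬ p ∣ 2 * z.re := by
    intro h
    rcases hp.2.2 2 z.re h with h2 | h2
    · have hna : p.natAbs ∣ 2 := by
        have := Int.natAbs_dvd_natAbs.mpr h2
        simpa using this
      have hpn : p.natAbs.Prime := Int.prime_iff_natAbs_prime.mp hp
      have h2' : p.natAbs = 2 := (Nat.prime_dvd_prime_iff_eq hpn Nat.prime_two).mp hna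
      have heven : (2 : ℤ) ∣ p := by
        rcases Int.natAbs_eq p with h | h <;> rw [h, h2'] <;> norm_num
      obtain ⟨m, hm⟩ := heven
      exact (Int.not_odd_iff_even.mpr ⟨m, by linarith⟩) hpodd
    · exact hpre h2
  obtain ⟨r, s, hrs⟩ := (hp.coprime_iff_not_dvd).mpr hp2re
  -- r is odd
  have hrodd : Odd r := by
    have h1 : Odd (r * p) := by
      have h2 : r * p = 2 * (-(s * z.re)) + 1 := by linarith
      exact ⟨-(s * z.re), h2⟩
    exact (Int.odd_mul.mp h1).1
  obtain ⟨k, hk⟩ := hrodd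
  subst hk
  -- the key identities, at the level of Zsqrtd D
  set u : Zsqrtd D := z with hu
  set v : Zsqrtd D := star z with hv
  set P : Zsqrtd D := (p : Zsqrtd D) with hP
  set K : Zsqrtd D := (k : Zsqrtd D) with hK
  set S : Zsqrtd D := (s : Zsqrtd D) with hS
  have H1 : u * v = -P ^ 2 := by
    rw [hu, hv, ← Zsqrtd.norm_eq_mul_conj, hnorm]
    push_cast
    ring
  have H2 : (2 * K + 1) * P + S * (u + v) = 1 := by
    have hzz : u + v = ((2 * z.re : ℤ) : Zsqrtd D) := by
      ext <;> simp [hu, hv, Zsqrtd.re_add, Zsqrtd.im_add, Zsqrtd.re_star, Zsqrtd.im_star,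
        Zsqrtd.re_intCast, Zsqrtd.im_intCast]
      ring
    rw [hzz, hP, hK, hS]
    have : (((2 * k + 1) * p + s * (2 * z.re) : ℤ) : Zsqrtd D) = ((1 : ℤ) : Zsqrtd D) := by
      exact_mod_cast congrArg (Int.cast : ℤ → Zsqrtd D) hrs
    push_cast at this ⊢
    linear_combination this
  -- the matrix entries
  refine ⟨(K + 1) * P + S * u, S * P - K * u, (K + 1) * v - S * P, ?_, ?_⟩
  · -- idempotency relation a(1-a) = bc
    have hsa : star ((K + 1) * P + S * u) = (K + 1) * P + S * v := by
      simp [hK, hS, hP, hu, hv, star_add, star_mul', mul_comm]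
    linear_combination ((K + 1) * K + S ^ 2) * H1 + (-(S * u + (K + 1) * P)) * H2
  · -- the matrix factorization
    have hsa : star ((K + 1) * P + S * u) = (K + 1) * P + S * v := by
      simp [hK, hS, hP, hu, hv, star_add, star_mul', mul_comm]
    have hsb : star (S * P - K * u) = S * P - K * v := by
      simp [hK, hS, hP, hu, hv, star_sub, star_mul', mul_comm]
    have hsc : star ((K + 1) * v - S * P) = (K + 1) * u - S * P := by
      simp [hK, hS, hP, hu, hv, star_sub, star_add, star_mul', mul_comm]
    rw [Matrix.mul_fin_two, hsa, hsb, hsc]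
    have e11 : ((K + 1) * P + S * u) * ((K + 1) * P + S * v) +
        (S * P - K * u) * (S * P - K * v) = P := by
      linear_combination (S ^ 2 + K ^ 2) * H1 + P * H2
    have e12 : ((K + 1) * P + S * u) * ((K + 1) * u - S * P) +
        (S * P - K * u) * (1 - ((K + 1) * P + S * v)) = u := by
      linear_combination (-S) * H1 + ((K + 1) * u - S * P) * H2
    have e21 : ((K + 1) * v - S * P) * ((K + 1) * P + S * v) +
        (1 - ((K + 1) * P + S * u)) * (S * P - K * v) = v := by
      linear_combination (-S) * H1 + ((K + 1) * v - S * P) * H2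
    have e22 : ((K + 1) * v - S * P) * ((K + 1) * u - S * P) +
        (1 - ((K + 1) * P + S * u)) * (1 - ((K + 1) * P + S * v)) = -P := by
      linear_combination ((K + 1) ^ 2 + S ^ 2) * H1 + (-1 : Zsqrtd D) * H2
    rw [e11, e12, e21, e22]
end

section
/- Let D ≡ 2 (mod 4) be a square-free integer, p a prime with p ≡ 3 (mod 4), and z = z₁ + z₂√D ∈ Z[√D] with p | ‖z‖, k := ‖z‖/p, and p + k ≡ 2 (mod 4). Then there are no integers b₁, b₂ satisfying 0 = (p+k)b₁² − (p+k)D b₂² − 2z₁b₁ + 2z₂D b₂ + p − p². -/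
theorem stmt_16 (D : ℤ) (hD : Squarefree D) (hD4 : D % 4 = 2)
    (p : ℤ) (hp : Prime p) (hp4 : p % 4 = 3)
    (z₁ z₂ k : ℤ) (hk : z₁ ^ 2 - D * z₂ ^ 2 = p * k)
    (hpk : (p + k) % 4 = 2) :
    ¬ ∃ b₁ b₂ : ℤ,
      0 = (p + k) * b₁ ^ 2 - (p + k) * D * b₂ ^ 2 - 2 * z₁ * b₁ +
        2 * z₂ * D * b₂ + p - p ^ 2 := by
  rintro ⟨b₁, b₂, h⟩
  have hD' : ((D : ℤ) : ZMod 4) = 2 := by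
    rw [show (2 : ZMod 4) = ((2 : ℤ) : ZMod 4) by norm_num, ZMod.intCast_eq_intCast_iff]
    show D % 4 = 2 % 4
    omega
  have hp' : ((p : ℤ) : ZMod 4) = 3 := by
    rw [show (3 : ZMod 4) = ((3 : ℤ) : ZMod 4) by norm_num, ZMod.intCast_eq_intCast_iff]
    show p % 4 = 3 % 4
    omega
  have hpk' : (((p + k) : ℤ) : ZMod 4) = 2 := by
    rw [show (2 : ZMod 4) = ((2 : ℤ) : ZMod 4) by norm_num, ZMod.intCast_eq_intCast_iff]
    show (p + k) % 4 = 2 % 4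
    omega
  have hk' : ((k : ℤ) : ZMod 4) = 3 := by
    have : ((p : ℤ) : ZMod 4) + ((k : ℤ) : ZMod 4) = 2 := by push_cast at hpk' ⊢; exact hpk'
    rw [hp'] at this
    have h40 : (4 : ZMod 4) = 0 := by decide
    linear_combination this - h40
  have hkz : ((z₁ : ZMod 4)) ^ 2 - 2 * ((z₂ : ZMod 4)) ^ 2 = 3 * 3 := by
    have := congrArg (fun t : ℤ => (t : ZMod 4)) hk
    push_cast at this
    rw [hD', hp', hk'] at this
    exact this
  have h4 : (0 : ZMod 4) = 2 * (b₁ : ZMod 4) ^ 2 - 2 * 2 * (b₂ : ZMod 4) ^ 2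
      - 2 * (z₁ : ZMod 4) * (b₁ : ZMod 4) + 2 * (z₂ : ZMod 4) * 2 * (b₂ : ZMod 4) + 3 - 3 ^ 2 := by
    have := congrArg (fun t : ℤ => (t : ZMod 4)) h
    push_cast at this
    rw [hD', hp'] at this
    rw [hk'] at this
    have h40 : (4 : ZMod 4) = 0 := by decide
    linear_combination this + (b₁ : ZMod 4) ^ 2 * h40 - 2 * (b₂ : ZMod 4) ^ 2 * h40
  revert hkz h4
  generalize (b₁ : ZMod 4) = a
  generalize (b₂ : ZMod 4) = b
  generalize (z₁ : ZMod 4) = x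
  generalize (z₂ : ZMod 4) = y
  revert a b x y
  decide
end

section
/- There do not exist integers b₁, b₂ such that 0 = 2b₁² − 20b₂² − 2b₁ + 40b₂ + 3 − 9, i.e., the equation 2b₁² − 20b₂² − 2b₁ + 40b₂ − 6 = 0 has no integer solutions. Consequently (via Theorem on equation (last3)), A(3, 1+2√10) = [[3, 1+2√10],[1−2√10, −13]] admits no factorization of the conjugate-symmetric idempotent form over Z[√10]. -/
theorem stmt_18 :
    (¬ ∃ b₁ b₂ : ℤ,
        2 * b₁ ^ 2 - 20 * b₂ ^ 2 - 2 * b₁ + 40 * b₂ - 6 = 0) ∧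
      let z : Zsqrtd 10 := 1 + 2 * Zsqrtd.sqrtd
      ¬ ∃ a b c : Zsqrtd 10, a * (1 - a) = b * c ∧
        !![(3 : Zsqrtd 10), z; star z, -13] =
          !![a, b; c, 1 - a] * !![star a, star c; star b, 1 - star a] := by
  constructor
  · rintro ⟨b₁, b₂, h⟩
    obtain ⟨e, he⟩ := Int.even_mul_succ_self b₁
    have h1 : b₁ * b₁ + b₁ = e + e := by linear_combination he
    have h2 : 2 * (b₁ * b₁) - 20 * (b₂ * b₂) - 2 * b₁ + 40 * b₂ - 6 = 0 := by
      linear_combination h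
    omega
  · intro z
    rintro ⟨a, b, c, hfac, hM⟩
    rw [Matrix.mul_fin_two] at hM
    have h00 : (3 : Zsqrtd 10) = a * star a + b * star b := by
      have := congrFun (congrFun hM 0) 0
      simpa using this
    have h11 : (-13 : Zsqrtd 10) = c * star c + (1 - a) * (1 - star a) := by
      have := congrFun (congrFun hM 1) 1
      simpa using this
    -- convert to norms
    have hn0 : Zsqrtd.norm a + Zsqrtd.norm b = 3 := by
      have : ((Zsqrtd.norm a + Zsqrtd.norm b : ℤ) : Zsqrtd 10) = ((3 : ℤ) : Zsqrtd 10) := by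
        push_cast
        rw [Zsqrtd.norm_eq_mul_conj, Zsqrtd.norm_eq_mul_conj]
        exact_mod_cast h00.symm
      exact_mod_cast (Int.cast_inj (α := Zsqrtd 10)).1 this
    have hs : star (1 - a) = 1 - star a := by simp
    have hn1 : Zsqrtd.norm c + Zsqrtd.norm (1 - a) = -13 := by
      have : ((Zsqrtd.norm c + Zsqrtd.norm (1 - a) : ℤ) : Zsqrtd 10) = ((-13 : ℤ) : Zsqrtd 10) := by
        push_cast
        rw [Zsqrtd.norm_eq_mul_conj, Zsqrtd.norm_eq_mul_conj, hs]
        exact_mod_cast h11.symm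
      exact_mod_cast (Int.cast_inj (α := Zsqrtd 10)).1 this
    have hprod : Zsqrtd.norm a * Zsqrtd.norm (1 - a) = Zsqrtd.norm b * Zsqrtd.norm c := by
      rw [← Zsqrtd.norm_mul, ← Zsqrtd.norm_mul, hfac]
    set u := Zsqrtd.norm a with hu
    set t := Zsqrtd.norm (1 - a) with ht
    have key : 13 * u = 3 * t + 39 := by
      have hv : Zsqrtd.norm b = 3 - u := by linarith
      have hw : Zsqrtd.norm c = -13 - t := by linarith
      rw [hv, hw] at hprod
      linear_combination -hprod
    set r := a.re with hr
    set s := a.im with hs2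
    have hud : u = r * r - 10 * (s * s) := by
      rw [hu, Zsqrtd.norm_def]; ring
    have htd : t = (1 - r) * (1 - r) - 10 * (s * s) := by
      rw [ht, Zsqrtd.norm_def]
      simp [Zsqrtd.re_sub, Zsqrtd.im_sub, Zsqrtd.re_one, Zsqrtd.im_one]
      ring
    obtain ⟨e, he⟩ := Int.even_mul_succ_self r
    have h1 : r * r + r = e + e := by linear_combination he
    -- 5u = 21 - 3r from key and t - u = 1 - 2r
    have h2 : t - u = 1 - 2 * r := by rw [hud, htd]; ring
    have h3 : 5 * u = 21 - 3 * r := by linarith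
    -- now substitute u = P - 10 Q
    have h4 : 5 * (r * r) - 50 * (s * s) = 21 - 3 * r := by
      rw [hud] at h3; linarith
    -- parity contradiction
    set P := r * r
    set Q := s * s
    omega
end

section
/- For p = 2 and square-free D ≡ 2 (mod 4), let z = z₁ + z₂√D with ‖z‖ = 2k, k ≡ 3 (mod 4), and ⟨2,z⟩ non-principal. If there exist integers b₁, b₂ with 0 = (2+k)b₁² − (2+k)D b₂² − 2z₁b₁ + 2z₂D b₂ − 2, then z₁ ≡ 0 (mod 2), z₂ ≡ 1 (mod 2), b₁ ≡ 0 (mod 2), and b₂ ≡ 1 (mod 2). -/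
lemma zmod4_key : ∀ a b c d e : ZMod 4,
    a ^ 2 - 2 * b ^ 2 = 2 * e → e = 3 →
    (0 : ZMod 4) = (2 + e) * c ^ 2 - (2 + e) * 2 * d ^ 2 - 2 * a * c + 2 * b * 2 * d - 2 →
    (a = 0 ∨ a = 2) ∧ (b = 1 ∨ b = 3) ∧ (c = 0 ∨ c = 2) ∧ (d = 1 ∨ d = 3) := by
  decide

theorem stmt_19 (D : ℤ) (hD : Squarefree D) (hD4 : D % 4 = 2)
    (z₁ z₂ k : ℤ) (hnorm : z₁ ^ 2 - D * z₂ ^ 2 = 2 * k) (hk : k % 4 = 3)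
    (hnpr : ¬ (Ideal.span {(2 : Zsqrtd D), (⟨z₁, z₂⟩ : Zsqrtd D)}).IsPrincipal)
    (b₁ b₂ : ℤ)
    (heq : 0 = (2 + k) * b₁ ^ 2 - (2 + k) * D * b₂ ^ 2 - 2 * z₁ * b₁ +
      2 * z₂ * D * b₂ - 2) :
    z₁ % 2 = 0 ∧ z₂ % 2 = 1 ∧ b₁ % 2 = 0 ∧ b₂ % 2 = 1 := by
  have cst : ∀ x r : ℤ, (4 : ℤ) ∣ x - r → (x : ZMod 4) = (r : ZMod 4) := by
    intro x r h
    have : ((x - r : ℤ) : ZMod 4) = 0 :=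
      (ZMod.intCast_zmod_eq_zero_iff_dvd _ 4).mpr (by exact_mod_cast h)
    push_cast at this
    linear_combination this
  have hDc : (D : ZMod 4) = 2 := by
    have := cst D 2 (by omega); push_cast at this; exact this
  have hkc : (k : ZMod 4) = 3 := by
    have := cst k 3 (by omega); push_cast at this; exact this
  have h1 : ((z₁ : ZMod 4)) ^ 2 - 2 * (z₂ : ZMod 4) ^ 2 = 2 * (k : ZMod 4) := by
    have := congrArg (Int.cast : ℤ → ZMod 4) hnorm
    push_cast at this
    rw [hDc] at this
    linear_combination this
  have h2 : (0 : ZMod 4) = (2 + (k : ZMod 4)) * (b₁ : ZMod 4) ^ 2 -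
      (2 + (k : ZMod 4)) * 2 * (b₂ : ZMod 4) ^ 2 - 2 * (z₁ : ZMod 4) * (b₁ : ZMod 4) +
      2 * (z₂ : ZMod 4) * 2 * (b₂ : ZMod 4) - 2 := by
    have := congrArg (Int.cast : ℤ → ZMod 4) heq
    push_cast at this
    rw [hDc] at this
    linear_combination this
  obtain ⟨ha, hb, hc, hd⟩ := zmod4_key _ _ _ _ _ h1 hkc h2
  have dv : ∀ x : ℤ, ∀ r : ℤ, ((x : ZMod 4) = (r : ZMod 4)) → (4 : ℤ) ∣ x - r := by
    intro x r h
    have : ((x - r : ℤ) : ZMod 4) = 0 := by push_cast [h]; ring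
    exact_mod_cast (ZMod.intCast_zmod_eq_zero_iff_dvd _ 4).mp this
  have norm_cases : ∀ x : ℤ, (x : ZMod 4) = 0 ∨ (x : ZMod 4) = 2 → x % 2 = 0 := by
    rintro x (h | h)
    · have := dv x 0 (by simpa using h); omega
    · have := dv x 2 (by push_cast; exact h); omega
  have odd_cases : ∀ x : ℤ, (x : ZMod 4) = 1 ∨ (x : ZMod 4) = 3 → x % 2 = 1 := by
    rintro x (h | h)
    · have := dv x 1 (by push_cast; exact h); omega
    · have := dv x 3 (by push_cast; exact h); omega
  exact ⟨norm_cases _ ha, odd_cases _ hb, norm_cases _ hc, odd_cases _ hd⟩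
end
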